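/- arXiv:2205.03161 — 3 statements merged into one kernel-verified Lean document; each statement's English description precedes it below -/
import Mathlib

section
/- For real a > 0, y > 0, and real η > 0, ∫₀^∞ x^{η-1} e^{-ax} cos(xy) dx = Γ(η) (a² + y²)^{-η/2} cos(η arctan(y/a)). -/
/-!
For `0 < re s` and `0 < re a`, `∫₀^∞ x^(a-1) e^(-s x) dx = s^(-a) Γ(a)`: for real `s` this is the
substitution `x ↦ x / s` in Euler's integral, and both sides are holomorphic in `s` on the right
half-plane (the left one by differentiating under the integral sign, with the domination
`x^(re a) e^(-(re s₀ / 2) x)` near `s₀`), so the identity theorem extends it. Taking the exponent `η`,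
`s = a + i y` and real parts gives the formula, since `a + i y` has modulus `√(a² + y²)` and
argument `arctan (y / a)`.
-/

open Real Set MeasureTheory Topology

theorem integrableOn_rpow_mul_exp_neg_mul {t c : ℝ} (ht : -1 < t) (hc : 0 < c) :
    IntegrableOn (fun x : ℝ => x ^ t * Real.exp (-(c * x))) (Ioi 0) :=
  (integrableOn_rpow_mul_exp_neg_mul_rpow ht one_pos hc).congr_fun
    (fun x _ => by simp only [Real.rpow_one, neg_mul]) measurableSet_Ioi

theorem AnalyticOnNhd.eqOn_of_preconnected_of_eventuallyEq_ofReal {E : Type*}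
    [NormedAddCommGroup E] [NormedSpace ℂ E] {f g : ℂ → E} {U : Set ℂ}
    (hf : AnalyticOnNhd ℂ f U) (hg : AnalyticOnNhd ℂ g U) (hU : IsPreconnected U) {x : ℝ}
    (hx : (x : ℂ) ∈ U) (hfg : ∀ᶠ r : ℝ in 𝓝[≠] x, f r = g r) : EqOn f g U :=
  hf.eqOn_of_preconnected_of_frequently_eq hg hU hx <|
    (Complex.ofRealCLM.hasDerivAt.tendsto_nhdsNE (by simp)).frequently hfg.frequently

namespace Complex

variable {a s : ℂ}

theorem norm_cpow_mul_exp_neg_mul {x : ℝ} (hx : 0 < x) :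
    ‖(x : ℂ) ^ (a - 1) * exp (-(s * x))‖ = x ^ (a.re - 1) * Real.exp (-(s.re * x)) := by
  rw [norm_mul, norm_cpow_eq_rpow_re_of_pos hx, norm_exp]
  simp

theorem continuousOn_cpow_mul_exp_neg_mul (a s : ℂ) :
    ContinuousOn (fun x : ℝ => (x : ℂ) ^ (a - 1) * exp (-(s * x))) (Ioi 0) := by
  refine ContinuousOn.mul (fun x hx => ?_) (by fun_prop)
  exact (continuousAt_ofReal_cpow_const x _ (Or.inr (ne_of_gt hx))).continuousWithinAt

theorem integrableOn_cpow_mul_exp_neg_mul (ha : 0 < a.re) (hs : 0 < s.re) :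
    IntegrableOn (fun x : ℝ => (x : ℂ) ^ (a - 1) * exp (-(s * x))) (Ioi 0) := by
  refine Integrable.mono' (integrableOn_rpow_mul_exp_neg_mul (t := a.re - 1) (by linarith) hs)
    ((continuousOn_cpow_mul_exp_neg_mul a s).aestronglyMeasurable measurableSet_Ioi) ?_
  filter_upwards [ae_restrict_mem measurableSet_Ioi] with x hx
  exact (norm_cpow_mul_exp_neg_mul hx).le

theorem hasDerivAt_cpow_mul_exp_neg_mul (a s : ℂ) (x : ℝ) :
    HasDerivAt (fun s : ℂ => (x : ℂ) ^ (a - 1) * exp (-(s * x)))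
      (-(x * ((x : ℂ) ^ (a - 1) * exp (-(s * x))))) s := by
  have hlin : HasDerivAt (fun s : ℂ => -(s * x)) (-(x : ℂ)) s := by
    simpa [Pi.neg_def] using ((hasDerivAt_id s).mul_const (x : ℂ)).neg
  exact (hlin.cexp.const_mul _).congr_deriv (by ring)

theorem norm_ofReal_mul_cpow_mul_exp_neg_mul_le {x c : ℝ} (hx : 0 < x) (hc : c ≤ s.re) :
    ‖(x : ℂ) * ((x : ℂ) ^ (a - 1) * exp (-(s * x)))‖ ≤ x ^ a.re * Real.exp (-(c * x)) := by
  rw [norm_mul, norm_cpow_mul_exp_neg_mul hx, norm_real, Real.norm_of_nonneg hx.le, ← mul_assoc,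
    Real.rpow_sub_one hx.ne', mul_div_cancel₀ _ hx.ne']
  gcongr

theorem differentiableAt_integral_cpow_mul_exp_neg_mul (ha : 0 < a.re) (hs : 0 < s.re) :
    DifferentiableAt ℂ (fun s : ℂ => ∫ x in Ioi (0 : ℝ), (x : ℂ) ^ (a - 1) * exp (-(s * x))) s := by
  have hc : 0 < s.re / 2 := half_pos hs
  have hball : ∀ z ∈ Metric.ball s (s.re / 2), s.re / 2 ≤ z.re := fun z hz => by
    have := (abs_lt.mp ((abs_re_le_norm (z - s)).trans_lt (mem_ball_iff_norm.mp hz))).1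
    simp only [sub_re] at this
    linarith
  refine (hasDerivAt_integral_of_dominated_loc_of_deriv_le (Metric.ball_mem_nhds s hc)
    (.of_forall fun z => (continuousOn_cpow_mul_exp_neg_mul a z).aestronglyMeasurable
      measurableSet_Ioi) (integrableOn_cpow_mul_exp_neg_mul ha hs)
    (((continuous_ofReal.continuousOn.mul (continuousOn_cpow_mul_exp_neg_mul a s)).neg
      ).aestronglyMeasurable measurableSet_Ioi) ?_
    (integrableOn_rpow_mul_exp_neg_mul (t := a.re) (by linarith) hc)
    (.of_forall fun x z _ => hasDerivAt_cpow_mul_exp_neg_mul a z x)).2.differentiableAt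
  filter_upwards [ae_restrict_mem measurableSet_Ioi] with x hx z hz
  rw [norm_neg]
  exact norm_ofReal_mul_cpow_mul_exp_neg_mul_le hx (hball z hz)

theorem integral_cpow_mul_exp_neg_complex_mul_Ioi (ha : 0 < a.re) (hs : 0 < s.re) :
    ∫ x in Ioi (0 : ℝ), (x : ℂ) ^ (a - 1) * exp (-(s * x)) = s ^ (-a) * Gamma a := by
  have hU : IsOpen {z : ℂ | 0 < z.re} := isOpen_lt continuous_const continuous_re
  refine AnalyticOnNhd.eqOn_of_preconnected_of_eventuallyEq_ofReal (x := 1)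
    (DifferentiableOn.analyticOnNhd (fun z hz =>
      (differentiableAt_integral_cpow_mul_exp_neg_mul ha hz).differentiableWithinAt) hU)
    (DifferentiableOn.analyticOnNhd (fun z hz =>
      ((differentiableAt_fun_id.cpow_const (mem_slitPlane_iff.mpr (Or.inl hz))).mul_const _
        ).differentiableWithinAt) hU)
    (convex_halfSpace_re_gt 0).isPreconnected (show 0 < ((1 : ℝ) : ℂ).re by simp) ?_ hs
  filter_upwards [nhdsWithin_le_nhds (Ioi_mem_nhds one_pos)] with r hr
  have hr : 0 < r := hr
  have harg : arg r ≠ π := by rw [arg_ofReal_of_nonneg hr.le]; exact pi_ne_zero.symm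
  rw [integral_cpow_mul_exp_neg_mul_Ioi ha hr, one_div, inv_cpow _ _ harg, ← cpow_neg]

theorem arg_eq_arctan_of_re_pos {z : ℂ} (hz : 0 < z.re) : arg z = Real.arctan (z.im / z.re) := by
  have hbound := abs_lt.mp (abs_arg_lt_pi_div_two_iff.mpr (Or.inl hz))
  rw [← tan_arg, Real.arctan_tan hbound.1 hbound.2]

theorem re_add_mul_I_cpow_neg_ofReal {a : ℝ} (y η : ℝ) (ha : 0 < a) :
    ((a + y * I) ^ (-(η : ℂ))).re =
      (a ^ 2 + y ^ 2) ^ (-η / 2) * Real.cos (η * Real.arctan (y / a)) := by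
  have hre : 0 < (a + y * I : ℂ).re := by simpa using ha
  rw [← ofReal_neg, cpow_ofReal_re, norm_add_mul_I, arg_eq_arctan_of_re_pos hre,
    Real.sqrt_eq_rpow, ← Real.rpow_mul (by positivity)]
  simp only [mul_neg, Real.cos_neg, add_re, add_im, mul_re, mul_im, ofReal_re, ofReal_im, I_re,
    I_im, mul_zero, mul_one, sub_self, add_zero, zero_add]
  ring_nf

theorem re_ofReal_cpow_mul_exp_neg_mul {x : ℝ} (hx : 0 < x) (η a y : ℝ) :
    ((x : ℂ) ^ ((η : ℂ) - 1) * exp (-((a + y * I) * x))).re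
      = x ^ (η - 1) * Real.exp (-(a * x)) * Real.cos (x * y) := by
  rw [← ofReal_one, ← ofReal_sub, ← ofReal_cpow hx.le, re_ofReal_mul, exp_re]
  simp only [neg_re, neg_im, mul_re, mul_im, add_re, add_im, ofReal_re, ofReal_im, I_re, I_im]
  rw [Real.cos_neg]
  ring_nf

end Complex

theorem stmt3_general (a y η : ℝ) (ha : 0 < a) (hη : 0 < η) :
    (∫ x in Ioi (0 : ℝ), x ^ (η - 1) * Real.exp (-(a * x)) * Real.cos (x * y)) =
      Real.Gamma η * (a ^ 2 + y ^ 2) ^ (-η / 2) * Real.cos (η * Real.arctan (y / a)) := by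
  have hre : 0 < (a + y * Complex.I : ℂ).re := by simpa using ha
  have hη' : 0 < (η : ℂ).re := by simpa using hη
  calc ∫ x in Ioi (0 : ℝ), x ^ (η - 1) * Real.exp (-(a * x)) * Real.cos (x * y)
      = ∫ x in Ioi (0 : ℝ),
          ((x : ℂ) ^ ((η : ℂ) - 1) * Complex.exp (-((a + y * Complex.I) * x))).re :=
        setIntegral_congr_fun measurableSet_Ioi fun x hx =>
          (Complex.re_ofReal_cpow_mul_exp_neg_mul hx η a y).symm
    _ = (∫ x in Ioi (0 : ℝ),
          (x : ℂ) ^ ((η : ℂ) - 1) * Complex.exp (-((a + y * Complex.I) * x))).re :=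
        integral_re (Complex.integrableOn_cpow_mul_exp_neg_mul hη' hre)
    _ = ((a + y * Complex.I) ^ (-(η : ℂ)) * Complex.Gamma η).re := by
        rw [Complex.integral_cpow_mul_exp_neg_complex_mul_Ioi hη' hre]
    _ = Real.Gamma η * (a ^ 2 + y ^ 2) ^ (-η / 2) * Real.cos (η * Real.arctan (y / a)) := by
        rw [Complex.Gamma_ofReal, Complex.re_mul_ofReal,
          Complex.re_add_mul_I_cpow_neg_ofReal y η ha]
        ring

theorem stmt3 (a y η : ℝ) (ha : 0 < a) (hy : 0 < y) (hη : 0 < η) :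
    (∫ x in Ioi (0 : ℝ), x ^ (η - 1) * Real.exp (-(a * x)) * Real.cos (x * y)) =
      Real.Gamma η * (a ^ 2 + y ^ 2) ^ (-η / 2) * Real.cos (η * Real.arctan (y / a)) :=
  stmt3_general a y η ha hη
end

section
/- For every real n > 0, ∫₀^∞ x sin(πnx)/(e^{2πx}-1) dx = (i/(8π²)) · [ψ'(1 + in/2) - ψ'(1 - in/2)], where ψ' is the derivative of the digamma function (the trigamma function). -/
open Complex Real Set

/-- The trigamma function `ψ'(z) = Σ_{k≥0} (z+k)^{-2}` for `Re z > 0`. -/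
noncomputable def trigamma (z : ℂ) : ℂ := ∑' k : ℕ, (z + k) ^ (-2 : ℤ)

/-!
Expanding `1 / (e^{2πx} - 1) = Σ_{k ≥ 0} e^{-2π(k+1)x}` and integrating term by term (dominated by
`x e^{-cx}`, whose integral `c⁻²` is summable over `c = 2π(k+1)`) reduces the integral to
`∫₀^∞ x sin(bx) e^{-cx} dx`. Writing `sin` through exponentials and using `∫₀^∞ x e^{-wx} dx = w⁻²`
for `Re w > 0`, this is `(i/2) ((c + ib)⁻² - (c - ib)⁻²)`; with `c + ib = 2π(1 + in/2 + k)` the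
sum over `k` becomes the difference of the two trigamma series.
-/

open MeasureTheory Filter Topology

lemma integrableOn_Ioi_mul_exp_neg_mul {c : ℝ} (hc : 0 < c) :
    IntegrableOn (fun x : ℝ => x * Real.exp (-c * x)) (Ioi 0) := by
  simpa using integrableOn_rpow_mul_exp_neg_mul_rpow (s := 1) (p := 1) (by norm_num) one_pos hc

lemma integral_Ioi_mul_exp_neg_mul {c : ℝ} (hc : 0 < c) :
    ∫ x in Ioi (0 : ℝ), x * Real.exp (-c * x) = (c ^ 2)⁻¹ := by
  have := Real.integral_rpow_mul_exp_neg_mul_Ioi (a := 2) two_pos hc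
  norm_num [Real.Gamma_two] at this
  simpa [neg_mul] using this

lemma norm_ofReal_pow_mul_cexp_neg_mul (k : ℕ) (w : ℂ) {x : ℝ} (hx : 0 ≤ x) :
    ‖(x : ℂ) ^ k * cexp (-w * x)‖ = x ^ k * Real.exp (-w.re * x) := by
  simp [norm_exp, abs_of_nonneg hx]

lemma integrableOn_Ioi_ofReal_mul_cexp_neg_mul {w : ℂ} (hw : 0 < w.re) :
    IntegrableOn (fun x : ℝ => (x : ℂ) * cexp (-w * x)) (Ioi 0) := by
  refine (integrableOn_Ioi_mul_exp_neg_mul hw).mono' (by fun_prop) ?_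
  filter_upwards [ae_restrict_mem measurableSet_Ioi] with x hx
  simpa using (norm_ofReal_pow_mul_cexp_neg_mul 1 w hx.le).le

lemma tendsto_ofReal_pow_mul_cexp_neg_mul_atTop (k : ℕ) {w : ℂ} (hw : 0 < w.re) :
    Tendsto (fun x : ℝ => (x : ℂ) ^ k * cexp (-w * x)) atTop (𝓝 0) := by
  rw [tendsto_zero_iff_norm_tendsto_zero]
  refine (tendsto_rpow_mul_exp_neg_mul_atTop_nhds_zero k w.re hw).congr' ?_
  filter_upwards [eventually_ge_atTop 0] with x hx
  rw [norm_ofReal_pow_mul_cexp_neg_mul k w hx, Real.rpow_natCast]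

lemma integral_Ioi_ofReal_mul_cexp_neg_mul {w : ℂ} (hw : 0 < w.re) :
    ∫ x in Ioi (0 : ℝ), (x : ℂ) * cexp (-w * x) = (w ^ 2)⁻¹ := by
  have hw0 : w ≠ 0 := by rintro rfl; simp at hw
  set F : ℝ → ℂ := fun x => -(w⁻¹ * ((x : ℂ) * cexp (-w * x)) + (w ^ 2)⁻¹ * cexp (-w * x))
  have hderiv : ∀ x ∈ Ici (0 : ℝ), HasDerivAt F ((x : ℂ) * cexp (-w * x)) x := by
    intro x _
    have hexp : HasDerivAt (fun x : ℝ => cexp (-w * x)) (-w * cexp (-w * x)) x := by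
      simpa [mul_comm] using ((ofRealCLM.hasDerivAt (x := x)).const_mul (-w)).cexp
    have hid : HasDerivAt (fun x : ℝ => (x : ℂ)) 1 x := ofRealCLM.hasDerivAt
    refine (((hid.mul hexp).const_mul w⁻¹).add (hexp.const_mul (w ^ 2)⁻¹)).neg.congr_deriv ?_
    field_simp
    ring
  have hlim : Tendsto F atTop (𝓝 0) := by
    have := (((tendsto_ofReal_pow_mul_cexp_neg_mul_atTop 1 hw).const_mul w⁻¹).add
      ((tendsto_ofReal_pow_mul_cexp_neg_mul_atTop 0 hw).const_mul (w ^ 2)⁻¹)).neg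
    simpa only [pow_one, pow_zero, one_mul, mul_zero, add_zero, neg_zero] using this
  rw [integral_Ioi_of_hasDerivAt_of_tendsto' hderiv (integrableOn_Ioi_ofReal_mul_cexp_neg_mul hw)
    hlim]
  simp [F]

lemma integral_Ioi_mul_sin_mul_exp_neg_mul {c : ℝ} (hc : 0 < c) (b : ℝ) :
    ((∫ x in Ioi (0 : ℝ), x * Real.sin (b * x) * Real.exp (-c * x) : ℝ) : ℂ) =
      I / 2 * (((c + b * I) ^ 2)⁻¹ - ((c - b * I) ^ 2)⁻¹) := by
  have hplus : 0 < ((c : ℂ) + b * I).re := by simpa using hc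
  have hminus : 0 < ((c : ℂ) - b * I).re := by simpa using hc
  have hpointwise : ∀ x : ℝ, ((x * Real.sin (b * x) * Real.exp (-c * x) : ℝ) : ℂ) =
      I / 2 * ((x : ℂ) * cexp (-(c + b * I) * x) - (x : ℂ) * cexp (-(c - b * I) * x)) := by
    intro x
    push_cast
    rw [Complex.sin, show -(c + b * I) * x = -(b * x) * I + -c * x by ring,
      show -(c - b * I) * x = b * x * I + -c * x by ring, Complex.exp_add, Complex.exp_add]
    ring
  rw [← integral_complex_ofReal, funext hpointwise, integral_const_mul,
    integral_sub (integrableOn_Ioi_ofReal_mul_cexp_neg_mul hplus)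
      (integrableOn_Ioi_ofReal_mul_cexp_neg_mul hminus),
    integral_Ioi_ofReal_mul_cexp_neg_mul hplus, integral_Ioi_ofReal_mul_cexp_neg_mul hminus]

lemma hasSum_exp_neg_succ_mul {t : ℝ} (ht : 0 < t) :
    HasSum (fun k : ℕ => Real.exp (-((k + 1) * t))) (Real.exp t - 1)⁻¹ := by
  have hq : Real.exp (-t) < 1 := Real.exp_lt_one_iff.mpr (neg_neg_of_pos ht)
  have hsum := (hasSum_geometric_of_lt_one (Real.exp_pos _).le hq).mul_left (Real.exp (-t))
  have hterms : (fun k : ℕ => Real.exp (-((k + 1) * t))) =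
      fun k => Real.exp (-t) * Real.exp (-t) ^ k := by
    funext k
    rw [← Real.exp_nat_mul, ← Real.exp_add]
    ring_nf
  have hvalue : (Real.exp t - 1)⁻¹ = Real.exp (-t) * (1 - Real.exp (-t))⁻¹ := by
    rw [Real.exp_neg]
    field_simp
  rwa [hterms, hvalue]

lemma hasSum_integral_mul_sin_mul_exp_neg_succ_mul {c : ℝ} (hc : 0 < c) (b : ℝ) :
    HasSum
      (fun k : ℕ => ∫ x in Ioi (0 : ℝ), x * Real.sin (b * x) * Real.exp (-((k + 1) * c) * x))
      (∫ x in Ioi (0 : ℝ), x * Real.sin (b * x) / (Real.exp (c * x) - 1)) := by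
  have hck : ∀ k : ℕ, 0 < (k + 1) * c := fun k => by positivity
  have hbound : ∀ k : ℕ, ∀ x ∈ Ioi (0 : ℝ),
      ‖x * Real.sin (b * x) * Real.exp (-((k + 1) * c) * x)‖ ≤
        x * Real.exp (-((k + 1) * c) * x) := by
    intro k x hx
    rw [norm_mul, norm_mul, Real.norm_of_nonneg hx.le, Real.norm_of_nonneg (Real.exp_pos _).le,
      Real.norm_eq_abs]
    gcongr
    exact mul_le_of_le_one_right hx.le (Real.abs_sin_le_one _)
  have hint : ∀ k : ℕ, Integrable (fun x => x * Real.sin (b * x) * Real.exp (-((k + 1) * c) * x))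
      (volume.restrict (Ioi 0)) := fun k =>
    (integrableOn_Ioi_mul_exp_neg_mul (hck k)).mono' (by fun_prop)
      ((ae_restrict_mem measurableSet_Ioi).mono (hbound k))
  have hsummable : Summable fun k : ℕ =>
      ∫ x in Ioi (0 : ℝ), ‖x * Real.sin (b * x) * Real.exp (-((k + 1) * c) * x)‖ := by
    have hsq : Summable fun k : ℕ => (((k + 1) * c) ^ 2)⁻¹ := by
      simpa [mul_pow] using
        ((summable_nat_add_iff 1).mpr (Real.summable_nat_pow_inv.mpr one_lt_two)).mul_left
          (c ^ 2)⁻¹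
    refine hsq.of_nonneg_of_le (fun k => integral_nonneg fun x => norm_nonneg _) fun k => ?_
    rw [← integral_Ioi_mul_exp_neg_mul (hck k)]
    exact setIntegral_mono_on (hint k).norm (integrableOn_Ioi_mul_exp_neg_mul (hck k))
      measurableSet_Ioi (hbound k)
  have hexpand : EqOn (fun x => x * Real.sin (b * x) / (Real.exp (c * x) - 1))
      (fun x => ∑' k : ℕ, x * Real.sin (b * x) * Real.exp (-((k + 1) * c) * x)) (Ioi 0) := by
    intro x hx
    have hgeom := (hasSum_exp_neg_succ_mul (mul_pos hc hx)).mul_left (x * Real.sin (b * x))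
    dsimp only
    rw [div_eq_mul_inv, ← hgeom.tsum_eq]
    congr 1 with k
    ring_nf
  rw [setIntegral_congr_fun measurableSet_Ioi hexpand]
  exact hasSum_integral_of_summable_integral_norm hint hsummable

lemma summable_inv_add_natCast_sq {z : ℂ} (hz : 0 < z.re) :
    Summable fun k : ℕ => ((z + k) ^ 2)⁻¹ := by
  refine .of_norm_bounded ((Real.summable_one_div_nat_add_rpow z.re 2).mpr one_lt_two) fun k => ?_
  have hpos : 0 < (k : ℝ) + z.re := by positivity
  rw [norm_inv, norm_pow, abs_of_pos hpos, one_div, Real.rpow_two]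
  gcongr
  calc (k : ℝ) + z.re = (z + k).re := by simp [add_comm]
    _ ≤ ‖z + k‖ := re_le_norm _

lemma trigamma_eq_tsum_inv_sq (z : ℂ) : trigamma z = ∑' k : ℕ, ((z + k) ^ 2)⁻¹ :=
  tsum_congr fun k => by rw [zpow_neg]; norm_cast

theorem stmt8_general (n : ℝ) :
    ((∫ x in Ioi (0 : ℝ), x * Real.sin (π * n * x) / (Real.exp (2 * π * x) - 1) : ℝ) : ℂ) =
      Complex.I / (8 * (π : ℂ) ^ 2) *
        (trigamma (1 + Complex.I * n / 2) - trigamma (1 - Complex.I * n / 2)) := by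
  have hterm : ∀ k : ℕ,
      ((∫ x in Ioi (0 : ℝ), x * Real.sin (π * n * x) * Real.exp (-((k + 1) * (2 * π)) * x) : ℝ)
        : ℂ) =
        Complex.I / (8 * (π : ℂ) ^ 2) * (((1 + Complex.I * n / 2 + k) ^ 2)⁻¹ -
          ((1 - Complex.I * n / 2 + k) ^ 2)⁻¹) := by
    intro k
    rw [integral_Ioi_mul_sin_mul_exp_neg_mul (by positivity)]
    push_cast
    field_simp
    ring
  have hsum := (Complex.hasSum_ofReal.mpr
    (hasSum_integral_mul_sin_mul_exp_neg_succ_mul Real.two_pi_pos (π * n))).congr_fun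
      fun k => (hterm k).symm
  rw [← hsum.tsum_eq, tsum_mul_left,
    (summable_inv_add_natCast_sq (by simp)).tsum_sub (summable_inv_add_natCast_sq (by simp)),
    trigamma_eq_tsum_inv_sq, trigamma_eq_tsum_inv_sq]

theorem stmt8 (n : ℝ) (hn : 0 < n) :
    ((∫ x in Ioi (0 : ℝ), x * Real.sin (π * n * x) / (Real.exp (2 * π * x) - 1) : ℝ) : ℂ) =
      Complex.I / (8 * (π : ℂ) ^ 2) *
        (trigamma (1 + Complex.I * n / 2) - trigamma (1 - Complex.I * n / 2)) :=
  stmt8_general n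
end

section
/- For real n with 0 < n < 2: Σ_{k=0}^∞ (1+k)^{-3} · Σ_{ℓ=0}^∞ [Γ(3+2ℓ)/(ℓ! Γ(3/2+ℓ))] (-n²/(16(1+k)²))^ℓ = (2i/(√π n)) · [ψ'(1 + in/2) - ψ'(1 - in/2)]. -/
/-!
By Legendre's duplication formula the coefficients of the Fox–Wright series are
`Γ(3 + 2l) / (l! Γ(3/2 + l)) = (4/√π) (l + 1) 4^l`, so for `|x| < 1/4` the series is the
derivative of a geometric series, `4 / (√π (1 - 4x)²)`. At `x = -n²/(16(1+k)²)` the `k`-th outer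
term becomes `64(1+k) / (√π (4(1+k)² + n²)²)`, and this is `2i/(√π n)` times the `k`-th term
`((1+k) + in/2)⁻² - ((1+k) - in/2)⁻² = -2i(1+k)n / ((1+k)² + n²/4)²` of the trigamma difference.
-/

open Complex Real

lemma Gamma_three_add_two_mul_div_factorial_mul (l : ℕ) :
    Real.Gamma (3 + 2 * l) / ((l.factorial : ℝ) * Real.Gamma (3 / 2 + l)) =
      4 * (l + 1) * 4 ^ l / √π := by
  have hdup := Real.Gamma_mul_Gamma_add_half (3 / 2 + l)
  rw [show (3 / 2 + (l : ℝ)) + 1 / 2 = (l + 1 : ℕ) + 1 by push_cast; ring,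
    Real.Gamma_nat_eq_factorial, Nat.factorial_succ, show 2 * (3 / 2 + (l : ℝ)) = 3 + 2 * l by ring,
    show (1 : ℝ) - (3 + 2 * l) = -((2 * (l + 1) : ℕ) : ℝ) by push_cast; ring,
    Real.rpow_neg zero_le_two, Real.rpow_natCast, pow_mul] at hdup
  have hΓ : 0 < Real.Gamma (3 / 2 + l) := Real.Gamma_pos_of_pos (by positivity)
  have hπ : 0 < √π := Real.sqrt_pos.mpr Real.pi_pos
  rw [div_eq_div_iff (by positivity) hπ.ne']
  have h4 : ((2 : ℝ) ^ 2) ^ (l + 1) ≠ 0 := by positivity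
  -- keeps `field_simp` from rewriting the argument `3 / 2 + l` to `(3 + 2 * l) / 2`
  set G := Real.Gamma (3 / 2 + l)
  field_simp at hdup
  push_cast at hdup
  linear_combination -hdup

lemma hasSum_foxWright {x : ℝ} (hx : |x| < 1 / 4) :
    HasSum (fun l : ℕ => Real.Gamma (3 + 2 * l) / ((l.factorial : ℝ) * Real.Gamma (3 / 2 + l)) * x ^ l)
      (4 / (√π * (1 - 4 * x) ^ 2)) := by
  have hy : ‖4 * x‖ < 1 := by rw [Real.norm_eq_abs, abs_mul]; norm_num; linarith
  have h1 : 1 - 4 * x ≠ 0 := by rw [Real.norm_eq_abs] at hy; linarith [le_abs_self (4 * x)]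
  rw [show 4 / (√π * (1 - 4 * x) ^ 2) = 4 / √π * (1 / (1 - 4 * x) ^ (1 + 1)) by
    field_simp]
  refine ((hasSum_choose_mul_geometric_of_norm_lt_one 1 hy).mul_left _).congr_fun fun l => ?_
  rw [Gamma_three_add_two_mul_div_factorial_mul, Nat.choose_one_right, mul_pow]
  push_cast
  ring

lemma tsum_foxWright_neg_sq_div {n a : ℝ} (h : n ^ 2 < 4 * a ^ 2) :
    ∑' l : ℕ, Real.Gamma (3 + 2 * l) / ((l.factorial : ℝ) * Real.Gamma (3 / 2 + l)) *
      (-n ^ 2 / (16 * a ^ 2)) ^ l = 64 * a ^ 4 / (√π * (4 * a ^ 2 + n ^ 2) ^ 2) := by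
  have ha : a ≠ 0 := by rintro rfl; nlinarith [sq_nonneg n]
  have hx : |-n ^ 2 / (16 * a ^ 2)| < 1 / 4 := by
    rw [abs_div, abs_neg, abs_of_nonneg (by positivity), abs_of_pos (by positivity),
      div_lt_iff₀ (by positivity)]
    linarith
  rw [(hasSum_foxWright hx).tsum_eq,
    show 1 - 4 * (-n ^ 2 / (16 * a ^ 2)) = (4 * a ^ 2 + n ^ 2) / (4 * a ^ 2) by field_simp; ring]
  field_simp
  norm_num

lemma summable_trigamma {z : ℂ} (hz : 0 < z.re) : Summable fun k : ℕ => (z + k) ^ (-2 : ℤ) := by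
  refine .of_norm_bounded ((Real.summable_one_div_nat_add_rpow z.re 2).2 one_lt_two) fun k => ?_
  have hk : 0 < k + z.re := by positivity
  rw [norm_zpow, zpow_neg, Real.rpow_two, abs_of_pos hk, one_div, zpow_two, ← sq]
  gcongr
  simpa [add_comm] using Complex.re_le_norm (z + k)

lemma add_I_mul_zpow_neg_two_sub_sub_I_mul_zpow_neg_two {a b : ℂ} (h : a ^ 2 + b ^ 2 ≠ 0) :
    (a + I * b) ^ (-2 : ℤ) - (a - I * b) ^ (-2 : ℤ) = -4 * I * a * b / (a ^ 2 + b ^ 2) ^ 2 := by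
  have hfac : (a + I * b) * (a - I * b) = a ^ 2 + b ^ 2 := by linear_combination (-b ^ 2) * I_sq
  rw [← hfac] at h
  have h₁ : a + I * b ≠ 0 := left_ne_zero_of_mul h
  have h₂ : a - I * b ≠ 0 := right_ne_zero_of_mul h
  rw [zpow_neg, zpow_neg, ← hfac]
  field_simp
  ring

lemma trigamma_add_I_mul_sub_trigamma_sub_I_mul {a : ℝ} (ha : 0 < a) (b : ℝ) :
    trigamma (a + I * b) - trigamma (a - I * b) =
      ∑' k : ℕ, -4 * I * (a + k) * b / ((a + k) ^ 2 + b ^ 2) ^ 2 := by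
  rw [trigamma, trigamma, ← (summable_trigamma (by simpa)).tsum_sub (summable_trigamma (by simpa))]
  refine tsum_congr fun k => ?_
  have hpos : 0 < (a + k) ^ 2 + b ^ 2 := by positivity
  rw [show (a : ℂ) + I * b + k = (a + k : ℂ) + I * b by ring,
    show (a : ℂ) - I * b + k = (a + k : ℂ) - I * b by ring,
    add_I_mul_zpow_neg_two_sub_sub_I_mul_zpow_neg_two (by exact_mod_cast hpos.ne')]

theorem stmt16 (n : ℝ) (hn : 0 < n) (hn2 : n < 2) :
    ((∑' k : ℕ, (1 / (1 + (k : ℝ)) ^ 3) *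
        ∑' l : ℕ, Real.Gamma (3 + 2 * l) /
          ((l.factorial : ℝ) * Real.Gamma (3 / 2 + l)) *
          (-n ^ 2 / (16 * (1 + (k : ℝ)) ^ 2)) ^ l : ℝ) : ℂ) =
      2 * Complex.I / (((Real.sqrt π : ℝ) : ℂ) * n) *
        (trigamma (1 + Complex.I * n / 2) - trigamma (1 - Complex.I * n / 2)) := by
  have hπ : 0 < √π := Real.sqrt_pos.mpr Real.pi_pos
  have hterm (k : ℕ) : (1 / (1 + (k : ℝ)) ^ 3) * ∑' l : ℕ, Real.Gamma (3 + 2 * l) /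
        ((l.factorial : ℝ) * Real.Gamma (3 / 2 + l)) * (-n ^ 2 / (16 * (1 + (k : ℝ)) ^ 2)) ^ l =
      64 * (1 + k) / (√π * (4 * (1 + k) ^ 2 + n ^ 2) ^ 2) := by
    have hk : 1 ≤ 1 + (k : ℝ) := by simp
    rw [tsum_foxWright_neg_sq_div (by nlinarith)]
    field_simp
  have hn0 : (n : ℂ) ≠ 0 := by exact_mod_cast hn.ne'
  rw [tsum_congr hterm, Complex.ofReal_tsum,
    show (1 : ℂ) + I * n / 2 = ((1 : ℝ) : ℂ) + I * ((n / 2 : ℝ) : ℂ) by push_cast; ring,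
    show (1 : ℂ) - I * n / 2 = ((1 : ℝ) : ℂ) - I * ((n / 2 : ℝ) : ℂ) by push_cast; ring,
    trigamma_add_I_mul_sub_trigamma_sub_I_mul one_pos, ← tsum_mul_left]
  refine tsum_congr fun k => ?_
  have hposC : 4 * (1 + (k : ℂ)) ^ 2 + n ^ 2 ≠ 0 := by
    exact_mod_cast (by positivity : 0 < 4 * (1 + (k : ℝ)) ^ 2 + n ^ 2).ne'
  have hπC : (√π : ℂ) ≠ 0 := by exact_mod_cast hπ.ne'
  push_cast
  field_simp
  rw [I_sq]
  ring
end
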